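/- For every finite connected unweighted graph G, every edge e of G, every k ≥ 1 and every integer ρ ≥ 0, if tb_k(G) ≤ ρ then tb_k(G/e) ≤ ρ, where G/e is the graph obtained by contracting the edge e. -/

import Mathlib

open SimpleGraph

/-- A (Robertson–Seymour) tree-decomposition of a graph `G`:
a tree `T` on an index type `I` together with bags `X i ⊆ V` such that
every vertex is in some bag, every edge has both ends in some bag, and
for every path of `T` from `i` to `k` passing through `j`, `X i ∩ X k ⊆ X j`. -/
def IsTreeDecomp {V I : Type} (G : SimpleGraph V) (T : SimpleGraph I) (X : I → Set V) : Prop :=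
  T.IsTree ∧
  (∀ v : V, ∃ i, v ∈ X i) ∧
  (∀ u v : V, G.Adj u v → ∃ i, u ∈ X i ∧ v ∈ X i) ∧
  (∀ i j k : I, ∀ p : T.Walk i k, p.IsPath → j ∈ p.support → X i ∩ X k ⊆ X j)

/-- The disk `D_r(v,G)` of radius `r` centered at `v`. -/
def disk {V : Type} (G : SimpleGraph V) (v : V) (r : ℕ) : Set V :=
  {u | G.dist u v ≤ r}

/-- The tree-breadth of `G`: the minimum `r` such that `G` has a
tree-decomposition each bag of which is contained in a disk of radius `r`. -/
noncomputable def treeBreadth {V : Type} (G : SimpleGraph V) : ℕ :=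
  sInf { r : ℕ | ∃ (I : Type) (T : SimpleGraph I) (X : I → Set V),
    IsTreeDecomp G T X ∧ ∀ i, ∃ v : V, X i ⊆ disk G v r }

/-- The `k`-tree-breadth of `G`: the minimum `r` such that `G` has a
tree-decomposition each bag of which can be covered by at most `k` disks of radius `r`. -/
noncomputable def kTreeBreadth {V : Type} (k : ℕ) (G : SimpleGraph V) : ℕ :=
  sInf { r : ℕ | ∃ (I : Type) (T : SimpleGraph I) (X : I → Set V),
    IsTreeDecomp G T X ∧ ∀ i, ∃ s : Finset V, s.card ≤ k ∧ X i ⊆ ⋃ v ∈ s, disk G v r }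

/-- The tree-length of `G`: the minimum `l` such that `G` has a
tree-decomposition each bag of which has diameter at most `l` in `G`. -/
noncomputable def treeLength {V : Type} (G : SimpleGraph V) : ℕ :=
  sInf { l : ℕ | ∃ (I : Type) (T : SimpleGraph I) (X : I → Set V),
    IsTreeDecomp G T X ∧ ∀ i, ∀ u ∈ X i, ∀ v ∈ X i, G.dist u v ≤ l }

/-- The tree-width of `G`: the minimum `w` such that `G` has a
tree-decomposition each bag of which has at most `w + 1` vertices. -/
noncomputable def treeWidth {V : Type} (G : SimpleGraph V) : ℕ :=
  sInf { w : ℕ | ∃ (I : Type) (T : SimpleGraph I) (X : I → Set V),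
    IsTreeDecomp G T X ∧ ∀ i, (X i).ncard ≤ w + 1 }

/-- `S` is a balanced separator of `G`: every connected component of
`G[V ∖ S]` has at most `|V|/2` vertices. -/
def IsBalancedSeparator {V : Type} (G : SimpleGraph V) [Fintype V] (S : Set V) : Prop :=
  ∀ C : (G.induce Sᶜ).ConnectedComponent, 2 * Nat.card C.supp ≤ Fintype.card V

/-- The graph obtained from `G` by contracting the edge `xy`
(`y` is merged into `x`). -/
def contract {V : Type} (G : SimpleGraph V) (x y : V) : SimpleGraph {v : V // v ≠ y} where
  Adj a b := a ≠ b ∧ (G.Adj a.1 b.1 ∨ (a.1 = x ∧ G.Adj y b.1) ∨ (b.1 = x ∧ G.Adj y a.1))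
  symm := by
    constructor
    rintro a b ⟨hab, h⟩
    refine ⟨hab.symm, ?_⟩
    rcases h with h | ⟨h1, h2⟩ | ⟨h1, h2⟩
    · exact Or.inl h.symm
    · exact Or.inr (Or.inr ⟨h1, h2⟩)
    · exact Or.inr (Or.inl ⟨h1, h2⟩)
  loopless := by constructor; rintro a ⟨h, -⟩; exact h rfl

/-- A graph is chordal if every cycle of length at least four has a chord:
an edge of `G` between two vertices of the cycle that is not an edge of the cycle. -/
def IsChordal {V : Type} (G : SimpleGraph V) : Prop :=
  ∀ (v : V) (c : G.Walk v v), c.IsCycle → 4 ≤ c.length →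
    ∃ x y, G.Adj x y ∧ x ∈ c.support ∧ y ∈ c.support ∧ ¬ c.toSubgraph.Adj x y

section Aux
variable {V : Type} {G : SimpleGraph V} (x y : V)

open Classical in
noncomputable def cmap (hne : x ≠ y) : V → {v : V // v ≠ y} :=
  fun v => if h : v = y then ⟨x, hne⟩ else ⟨v, h⟩

variable {x y}

lemma cmap_ne (hne : x ≠ y) {v : V} (hv : v ≠ y) : cmap x y hne v = ⟨v, hv⟩ := by
  simp [cmap, hv]

lemma cmap_y (hne : x ≠ y) : cmap x y hne y = ⟨x, hne⟩ := by simp [cmap]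

lemma cmap_eq (hne : x ≠ y) {a b : V} (h : cmap x y hne a = cmap x y hne b) :
    a = b ∨ ((a = x ∨ a = y) ∧ (b = x ∨ b = y)) := by
  by_cases ha : a = y
  · by_cases hb : b = y
    · left; rw [ha, hb]
    · subst ha
      rw [cmap_y hne, cmap_ne hne hb] at h
      right
      exact ⟨Or.inr rfl, Or.inl (congrArg Subtype.val h.symm)⟩
  · by_cases hb : b = y
    · subst hb
      rw [cmap_y hne, cmap_ne hne ha] at h
      right
      exact ⟨Or.inl (congrArg Subtype.val h), Or.inr rfl⟩
    · rw [cmap_ne hne ha, cmap_ne hne hb] at h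
      left; exact congrArg Subtype.val h

lemma cmap_adj (hxy : G.Adj x y) {a b : V} (hab : G.Adj a b) :
    cmap x y hxy.ne a = cmap x y hxy.ne b ∨
      (contract G x y).Adj (cmap x y hxy.ne a) (cmap x y hxy.ne b) := by
  set hne := hxy.ne
  by_cases he : cmap x y hne a = cmap x y hne b
  · exact Or.inl he
  · right
    refine ⟨he, ?_⟩
    by_cases ha : a = y
    · by_cases hb : b = y
      · exact absurd (ha.trans hb.symm) hab.ne
      · rw [ha, cmap_y hne, cmap_ne hne hb]
        exact Or.inr (Or.inl ⟨rfl, ha ▸ hab⟩)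
    · by_cases hb : b = y
      · rw [hb, cmap_y hne, cmap_ne hne ha]
        exact Or.inr (Or.inr ⟨rfl, hb ▸ hab.symm⟩)
      · rw [cmap_ne hne ha, cmap_ne hne hb]
        exact Or.inl hab

lemma cmap_walk (hxy : G.Adj x y) {u v : V} (p : G.Walk u v) :
    ∃ p' : (contract G x y).Walk (cmap x y hxy.ne u) (cmap x y hxy.ne v),
      p'.length ≤ p.length := by
  induction p with
  | nil => exact ⟨Walk.nil, le_refl 0⟩
  | cons h p ih =>
    obtain ⟨p', hp'⟩ := ih
    rcases cmap_adj hxy h with he | hadj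
    · exact ⟨p'.copy he.symm rfl, by simpa using hp'.trans (Nat.le_succ _)⟩
    · exact ⟨Walk.cons hadj p', by simpa using hp'⟩

lemma cmap_dist (hG : G.Connected) (hxy : G.Adj x y) (u v : V) :
    (contract G x y).dist (cmap x y hxy.ne u) (cmap x y hxy.ne v) ≤ G.dist u v := by
  obtain ⟨p, hp⟩ := (hG.preconnected u v).exists_walk_length_eq_dist
  obtain ⟨p', hp'⟩ := cmap_walk hxy p
  exact (SimpleGraph.dist_le p').trans (hp'.trans hp.le)

lemma tree_path_split {I : Type} {T : SimpleGraph I} (hT : T.IsTree)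
    {i k m j : I} (p : T.Walk i k) (hp : p.IsPath) (hj : j ∈ p.support)
    (q1 : T.Walk i m) (q2 : T.Walk m k) :
    j ∈ q1.support ∨ j ∈ q2.support := by
  classical
  have huniq := hT.existsUnique_path i k
  have hb : (q1.append q2).bypass.IsPath := Walk.bypass_isPath _
  have : p = (q1.append q2).bypass := huniq.unique hp hb
  rw [this] at hj
  have := Walk.support_bypass_subset _ hj
  rw [Walk.mem_support_append_iff] at this
  exact this


/-- The `k`-tree-breadth does not increase under edge contraction. -/
theorem stmt12 {V : Type} [Fintype V] (G : SimpleGraph V) (hG : G.Connected)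
    (x y : V) (hxy : G.Adj x y) (k ρ : ℕ) (hk : 1 ≤ k) (h : kTreeBreadth k G ≤ ρ) :
    kTreeBreadth k (contract G x y) ≤ ρ := by
  classical
  obtain ⟨v0⟩ := hG.nonempty
  -- the defining set for `kTreeBreadth k G` is nonempty
  have hSne : {r : ℕ | ∃ (I : Type) (T : SimpleGraph I) (X : I → Set V),
      IsTreeDecomp G T X ∧ ∀ i, ∃ s : Finset V, s.card ≤ k ∧
        X i ⊆ ⋃ v ∈ s, disk G v r}.Nonempty := by
    refine ⟨Finset.univ.sup (fun u => G.dist u v0), Unit, ⊥, fun _ => Set.univ,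
      ⟨⟨?_, ?_⟩, fun v => ⟨(), Set.mem_univ v⟩,
        fun u v _ => ⟨(), Set.mem_univ u, Set.mem_univ v⟩,
        fun _ _ _ _ _ _ => fun w _ => Set.mem_univ w⟩, fun _ => ⟨{v0}, ?_, ?_⟩⟩
    · haveI : Nonempty Unit := ⟨()⟩
      exact ⟨fun u v => by cases u; cases v; exact Reachable.refl ()⟩
    · intro v c hc
      cases c with
      | nil => simp [Walk.IsCycle] at hc
      | cons h _ => simp at h
    · simpa using hk
    · intro u _
      simp only [Set.mem_iUnion, Finset.mem_singleton, exists_prop]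
      exact ⟨v0, rfl, Finset.le_sup (f := fun u => G.dist u v0) (Finset.mem_univ u)⟩
  have hmem : kTreeBreadth k G ∈ {r : ℕ | ∃ (I : Type) (T : SimpleGraph I) (X : I → Set V),
      IsTreeDecomp G T X ∧ ∀ i, ∃ s : Finset V, s.card ≤ k ∧
        X i ⊆ ⋃ v ∈ s, disk G v r} := Nat.sInf_mem hSne
  obtain ⟨I, T, X, hTD, hcov⟩ := hmem
  apply Nat.sInf_le
  refine ⟨I, T, fun i => cmap x y hxy.ne '' X i, ⟨hTD.1, ?_, ?_, ?_⟩, ?_⟩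
  · rintro ⟨a, ha⟩
    obtain ⟨i, hi⟩ := hTD.2.1 a
    exact ⟨i, a, hi, cmap_ne hxy.ne ha⟩
  · rintro ⟨a, ha⟩ ⟨b, hb⟩ ⟨hab, hc | ⟨h1, h2⟩ | ⟨h1, h2⟩⟩
    · obtain ⟨i, hai, hbi⟩ := hTD.2.2.1 a b hc
      exact ⟨i, ⟨a, hai, cmap_ne hxy.ne ha⟩, ⟨b, hbi, cmap_ne hxy.ne hb⟩⟩
    · obtain ⟨i, hyi, hbi⟩ := hTD.2.2.1 y b h2
      exact ⟨i, ⟨y, hyi, (cmap_y hxy.ne).trans (Subtype.ext h1.symm)⟩,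
        ⟨b, hbi, cmap_ne hxy.ne hb⟩⟩
    · obtain ⟨i, hyi, hai⟩ := hTD.2.2.1 y a h2
      exact ⟨i, ⟨a, hai, cmap_ne hxy.ne ha⟩,
        ⟨y, hyi, (cmap_y hxy.ne).trans (Subtype.ext h1.symm)⟩⟩
  · intro i j k' p hp hj
    rintro w ⟨⟨u, hu, hqu⟩, ⟨u', hu', hqu'⟩⟩
    rcases cmap_eq hxy.ne (hqu.trans hqu'.symm) with heq | ⟨hux, hu'x⟩
    · exact ⟨u, hTD.2.2.2 i j k' p hp hj ⟨hu, heq ▸ hu'⟩, hqu⟩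
    · obtain ⟨m, hxm, hym⟩ := hTD.2.2.1 x y hxy
      have hum : u ∈ X m := by rcases hux with rfl | rfl <;> assumption
      have hu'm : u' ∈ X m := by rcases hu'x with rfl | rfl <;> assumption
      obtain ⟨w1⟩ := hTD.1.isConnected.preconnected i m
      obtain ⟨w2⟩ := hTD.1.isConnected.preconnected m k'
      rcases tree_path_split hTD.1 p hp hj w1.bypass w2.bypass with h1 | h2
      · exact ⟨u, hTD.2.2.2 i j m w1.bypass (Walk.bypass_isPath w1) h1 ⟨hu, hum⟩, hqu⟩
      · exact ⟨u', hTD.2.2.2 m j k' w2.bypass (Walk.bypass_isPath w2) h2 ⟨hu'm, hu'⟩, hqu'⟩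
  · intro i
    obtain ⟨s, hs, hsub⟩ := hcov i
    refine ⟨s.image (cmap x y hxy.ne), (Finset.card_image_le).trans hs, ?_⟩
    rintro w ⟨u, hu, rfl⟩
    have := hsub hu
    simp only [Set.mem_iUnion, exists_prop] at this ⊢
    obtain ⟨v, hvs, hd⟩ := this
    refine ⟨cmap x y hxy.ne v, Finset.mem_image_of_mem _ hvs, ?_⟩
    exact (cmap_dist hG hxy u v).trans (hd.trans h)
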